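/- (Bounded-difference property of the variance estimator σ̂².) Let σ̂² be computed from samples (x₁,…,xₙ), (y₁,…,yₙ), and let (σ̂')² be computed from the samples obtained by replacing the single pair (x₁,y₁) by another pair (x₁',y₁') ∈ 𝒳 × 𝒳. Then |σ̂² − (σ̂')²| ≤ 36ν² (14/n − 11/n² + 3/n³) ≤ 504ν²/n. -/

import Mathlib

open MeasureTheory ProbabilityTheory Filter Finset

/-- `Hstar k (x,y) (x',y') = k(x,x') - k(x,y') - k(y,x')`. -/
noncomputable def Hstar {𝒳 : Type*} (k : 𝒳 → 𝒳 → ℝ) (u v : 𝒳 × 𝒳) : ℝ :=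
  k u.1 v.1 - k u.1 v.2 - k u.2 v.1

/-- The variance estimator
`σ̂² = (4/n³) ∑ᵢ (∑ⱼ H*ᵢⱼ)² − (4/n⁴) (∑ᵢ∑ⱼ H*ᵢⱼ)²` (sums include `i = j`). -/
noncomputable def sigmaHat {𝒳 : Type*} (k : 𝒳 → 𝒳 → ℝ) (n : ℕ) (u : Fin n → 𝒳 × 𝒳) : ℝ :=
  (4 / (n : ℝ) ^ 3) * ∑ i : Fin n, (∑ j : Fin n, Hstar k (u i) (u j)) ^ 2
    - (4 / (n : ℝ) ^ 4) * (∑ i : Fin n, ∑ j : Fin n, Hstar k (u i) (u j)) ^ 2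

/-!
Changing the sample at index `i₀` changes the matrix `Hᵢⱼ = H*(uᵢ, uⱼ)` only in row and
column `i₀`. With `|Hᵢⱼ| ≤ c := 3ν` every row sum is at most `nc` in size, and every row sum
other than row `i₀` moves by at most `2c`. Hence `∑ᵢ (∑ⱼ Hᵢⱼ)²` moves by at most
`(nc)² + (n - 1)·2c·2nc` and the square of the total sum by at most `2c(2n - 1)·2n²c`, which
after the normalisations `4/n³` and `4/n⁴` gives `4c²(13/n - 8/n²)`, below the stated bound.
-/

lemma abs_sq_sub_sq_le (a b : ℝ) : |a ^ 2 - b ^ 2| ≤ |a - b| * (|a| + |b|) := by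
  rw [sq_sub_sq, abs_mul, mul_comm]
  gcongr
  exact abs_add_le a b

lemma abs_sq_sub_sq_le_sq {a b C : ℝ} (ha : |a| ≤ C) (hb : |b| ≤ C) : |a ^ 2 - b ^ 2| ≤ C ^ 2 :=
  have ha' := abs_le.mp ha
  have hb' := abs_le.mp hb
  abs_sub_le_of_nonneg_of_le (sq_nonneg a) (sq_le_sq' ha'.1 ha'.2) (sq_nonneg b)
    (sq_le_sq' hb'.1 hb'.2)

section SingleIndex

variable {ι : Type*} [Fintype ι]

lemma abs_sum_le_card_mul {f : ι → ℝ} {c : ℝ} (h : ∀ i, |f i| ≤ c) :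
    |∑ i, f i| ≤ Fintype.card ι * c :=
  calc |∑ i, f i| ≤ ∑ i, |f i| := abs_sum_le_sum_abs _ _
    _ ≤ (univ : Finset ι).card • c := sum_le_card_nsmul _ _ _ fun i _ => h i
    _ = Fintype.card ι * c := by rw [nsmul_eq_mul, card_univ]

lemma abs_sum_le_of_abs_le_of_ne (f : ι → ℝ) (i₀ : ι) {A B : ℝ}
    (h₀ : |f i₀| ≤ A) (h : ∀ i, i ≠ i₀ → |f i| ≤ B) :
    |∑ i, f i| ≤ A + (Fintype.card ι - 1) * B := by
  classical
  calc |∑ i, f i| = |f i₀ + ∑ i ∈ univ.erase i₀, f i| := by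
        rw [add_sum_erase _ _ (mem_univ i₀)]
    _ ≤ |f i₀| + ∑ i ∈ univ.erase i₀, |f i| :=
        (abs_add_le _ _).trans (by gcongr; exact abs_sum_le_sum_abs _ _)
    _ ≤ A + (univ.erase i₀).card • B :=
        add_le_add h₀ (sum_le_card_nsmul _ _ _ fun i hi => h i (ne_of_mem_erase hi))
    _ = A + (Fintype.card ι - 1) * B := by
        rw [card_erase_of_mem (mem_univ _), card_univ, nsmul_eq_mul,
          Nat.cast_pred (Fintype.card_pos_iff.mpr ⟨i₀⟩)]

noncomputable def varianceStat (H : ι → ι → ℝ) : ℝ :=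
  4 / (Fintype.card ι : ℝ) ^ 3 * ∑ i, (∑ j, H i j) ^ 2
    - 4 / (Fintype.card ι : ℝ) ^ 4 * (∑ i, ∑ j, H i j) ^ 2

variable {H H' : ι → ι → ℝ} {c : ℝ} {i₀ : ι}
  (hH : ∀ i j, |H i j| ≤ c) (hH' : ∀ i j, |H' i j| ≤ c)
  (hoff : ∀ i j, i ≠ i₀ → j ≠ i₀ → H i j = H' i j)
include hH hH'

lemma abs_sum_row_sub_le (i : ι) : |∑ j, H i j - ∑ j, H' i j| ≤ 2 * Fintype.card ι * c := by
  have := add_le_add (abs_sum_le_card_mul (hH i)) (abs_sum_le_card_mul (hH' i))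
  linarith [abs_sub (∑ j, H i j) (∑ j, H' i j)]

include hoff

lemma abs_sum_row_sub_le_of_ne {i : ι} (hi : i ≠ i₀) :
    |∑ j, H i j - ∑ j, H' i j| ≤ 2 * c := by
  rw [← sum_sub_distrib]
  have h₀ : |H i i₀ - H' i i₀| ≤ 2 * c := by
    linarith [abs_sub (H i i₀) (H' i i₀), hH i i₀, hH' i i₀]
  simpa using abs_sum_le_of_abs_le_of_ne (fun j => H i j - H' i j) i₀ (B := 0) h₀
    fun j hj => by simp [hoff i j hi hj]

lemma abs_sum_sq_row_sub_le :
    |∑ i, (∑ j, H i j) ^ 2 - ∑ i, (∑ j, H' i j) ^ 2| ≤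
      (Fintype.card ι * c) ^ 2
        + (Fintype.card ι - 1) * (2 * c * (Fintype.card ι * c + Fintype.card ι * c)) := by
  rw [← sum_sub_distrib]
  refine abs_sum_le_of_abs_le_of_ne _ i₀
    (abs_sq_sub_sq_le_sq (abs_sum_le_card_mul (hH i₀)) (abs_sum_le_card_mul (hH' i₀)))
    fun i hi => (abs_sq_sub_sq_le _ _).trans ?_
  have hc : 0 ≤ c := (abs_nonneg _).trans (hH i₀ i₀)
  gcongr
  exacts [abs_sum_row_sub_le_of_ne hH hH' hoff hi, abs_sum_le_card_mul (hH i),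
    abs_sum_le_card_mul (hH' i)]

lemma abs_sq_sum_sub_le :
    |(∑ i, ∑ j, H i j) ^ 2 - (∑ i, ∑ j, H' i j) ^ 2| ≤
      (2 * Fintype.card ι * c + (Fintype.card ι - 1) * (2 * c))
        * (Fintype.card ι * (Fintype.card ι * c) + Fintype.card ι * (Fintype.card ι * c)) := by
  have hc : 0 ≤ c := (abs_nonneg _).trans (hH i₀ i₀)
  have hdiff : |∑ i, ∑ j, H i j - ∑ i, ∑ j, H' i j| ≤
      2 * Fintype.card ι * c + (Fintype.card ι - 1) * (2 * c) := by
    rw [← sum_sub_distrib]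
    exact abs_sum_le_of_abs_le_of_ne _ i₀ (abs_sum_row_sub_le hH hH' i₀)
      fun i hi => abs_sum_row_sub_le_of_ne hH hH' hoff hi
  refine (abs_sq_sub_sq_le _ _).trans
    (mul_le_mul hdiff (add_le_add ?_ ?_) (by positivity) ((abs_nonneg _).trans hdiff))
  exacts [abs_sum_le_card_mul fun i => abs_sum_le_card_mul (hH i),
    abs_sum_le_card_mul fun i => abs_sum_le_card_mul (hH' i)]

theorem abs_varianceStat_sub_le :
    |varianceStat H - varianceStat H'| ≤
      4 * c ^ 2 * (13 / Fintype.card ι - 8 / (Fintype.card ι : ℝ) ^ 2) := by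
  have hm : (0 : ℝ) < Fintype.card ι := Nat.cast_pos.mpr (Fintype.card_pos_iff.mpr ⟨i₀⟩)
  unfold varianceStat
  set m : ℝ := (Fintype.card ι : ℝ)
  calc _ = |4 / m ^ 3 * (∑ i, (∑ j, H i j) ^ 2 - ∑ i, (∑ j, H' i j) ^ 2)
          - 4 / m ^ 4 * ((∑ i, ∑ j, H i j) ^ 2 - (∑ i, ∑ j, H' i j) ^ 2)| := by
        congr 1; ring
    _ ≤ 4 / m ^ 3 * |∑ i, (∑ j, H i j) ^ 2 - ∑ i, (∑ j, H' i j) ^ 2|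
          + 4 / m ^ 4 * |(∑ i, ∑ j, H i j) ^ 2 - (∑ i, ∑ j, H' i j) ^ 2| := by
        refine (abs_sub _ _).trans_eq ?_
        rw [abs_mul, abs_mul, abs_of_pos (a := 4 / m ^ 3) (by positivity),
          abs_of_pos (a := 4 / m ^ 4) (by positivity)]
    _ ≤ 4 / m ^ 3 * ((m * c) ^ 2 + (m - 1) * (2 * c * (m * c + m * c)))
          + 4 / m ^ 4 * ((2 * m * c + (m - 1) * (2 * c)) * (m * (m * c) + m * (m * c))) := by
        gcongr
        exacts [abs_sum_sq_row_sub_le hH hH' hoff, abs_sq_sum_sub_le hH hH' hoff]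
    _ = 4 * c ^ 2 * (13 / m - 8 / m ^ 2) := by
        field_simp
        ring

end SingleIndex

lemma sigmaHat_eq_varianceStat {𝒳 : Type*} (k : 𝒳 → 𝒳 → ℝ) (n : ℕ) (u : Fin n → 𝒳 × 𝒳) :
    sigmaHat k n u = varianceStat fun i j => Hstar k (u i) (u j) := by
  simp only [sigmaHat, varianceStat, Fintype.card_fin]

lemma abs_Hstar_le {𝒳 : Type*} {k : 𝒳 → 𝒳 → ℝ} {ν : ℝ} (hbound : ∀ x x', |k x x'| ≤ ν)
    (v w : 𝒳 × 𝒳) : |Hstar k v w| ≤ 3 * ν := by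
  have h₁ := abs_le.mp (hbound v.1 w.1)
  have h₂ := abs_le.mp (hbound v.1 w.2)
  have h₃ := abs_le.mp (hbound v.2 w.1)
  rw [Hstar, abs_le]
  constructor <;> linarith

theorem sigmaHat_bounded_difference_general {𝒳 : Type*} (k : 𝒳 → 𝒳 → ℝ) (ν : ℝ)
    (hbound : ∀ x x', |k x x'| ≤ ν)
    (n : ℕ) (hn : 2 ≤ n)
    (u u' : Fin n → 𝒳 × 𝒳)
    (hu : ∀ i : Fin n, (i : ℕ) ≠ 0 → u' i = u i) :
    |sigmaHat k n u - sigmaHat k n u'| ≤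
        36 * ν ^ 2 * (14 / (n : ℝ) - 11 / (n : ℝ) ^ 2 + 3 / (n : ℝ) ^ 3) ∧
      36 * ν ^ 2 * (14 / (n : ℝ) - 11 / (n : ℝ) ^ 2 + 3 / (n : ℝ) ^ 3) ≤
        504 * ν ^ 2 / n := by
  have hn' : (2 : ℝ) ≤ n := by exact_mod_cast hn
  have hdiff := abs_varianceStat_sub_le (H := fun i j => Hstar k (u i) (u j))
    (H' := fun i j => Hstar k (u' i) (u' j)) (i₀ := ⟨0, by omega⟩)
    (fun _ _ => abs_Hstar_le hbound _ _) (fun _ _ => abs_Hstar_le hbound _ _)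
    fun i j hi hj => by
      rw [hu i (Fin.val_ne_iff.mpr hi), hu j (Fin.val_ne_iff.mpr hj)]
  rw [← sigmaHat_eq_varianceStat, ← sigmaHat_eq_varianceStat, Fintype.card_fin] at hdiff
  have hquad : 0 ≤ (n : ℝ) ^ 2 - 3 * n + 3 := by nlinarith
  constructor
  · refine hdiff.trans (sub_nonneg.mp ?_)
    have : 36 * ν ^ 2 * (14 / (n : ℝ) - 11 / (n : ℝ) ^ 2 + 3 / (n : ℝ) ^ 3)
        - 4 * (3 * ν) ^ 2 * (13 / n - 8 / (n : ℝ) ^ 2)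
        = 36 * ν ^ 2 * ((n : ℝ) ^ 2 - 3 * n + 3) / n ^ 3 := by
      field_simp
      ring
    rw [this]
    positivity
  · rw [← sub_nonneg]
    have : 504 * ν ^ 2 / n - 36 * ν ^ 2 * (14 / (n : ℝ) - 11 / (n : ℝ) ^ 2 + 3 / (n : ℝ) ^ 3)
        = 36 * ν ^ 2 * (11 * n - 3) / n ^ 3 := by
      field_simp
      ring
    rw [this]
    have : (0 : ℝ) ≤ 11 * n - 3 := by linarith
    positivity

/-- Bounded-difference property of the variance estimator `σ̂²`: replacing the
single sample pair `(x₁,y₁)` (index `0`) by another pair changes `σ̂²` by at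
most `36ν²(14/n − 11/n² + 3/n³) ≤ 504ν²/n`. -/
theorem sigmaHat_bounded_difference {𝒳 : Type*} (k : 𝒳 → 𝒳 → ℝ) (ν : ℝ)
    (hsymm : ∀ x x', k x x' = k x' x)
    (hbound : ∀ x x', |k x x'| ≤ ν)
    (n : ℕ) (hn : 2 ≤ n)
    (u u' : Fin n → 𝒳 × 𝒳)
    (hu : ∀ i : Fin n, (i : ℕ) ≠ 0 → u' i = u i) :
    |sigmaHat k n u - sigmaHat k n u'| ≤
        36 * ν ^ 2 * (14 / (n : ℝ) - 11 / (n : ℝ) ^ 2 + 3 / (n : ℝ) ^ 3) ∧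
      36 * ν ^ 2 * (14 / (n : ℝ) - 11 / (n : ℝ) ^ 2 + 3 / (n : ℝ) ^ 3) ≤
        504 * ν ^ 2 / n :=
  sigmaHat_bounded_difference_general k ν hbound n hn u u' hu
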